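/- arXiv:1303.6847 — 7 statements merged into one kernel-verified Lean document; each statement's English description precedes it below -/
import Mathlib

section
/- Suppose (a,k) and (a',k') both lie in G_ℝ^+ and both a and a' admit lifts to ℝ^n whose coordinates are weakly decreasing (i.e. they lie in Λ_ℝ^+). If (a,k) and (a',k') are conjugate in G_ℝ, then a = a' and k' = p k p^{-1} for some permutation p ∈ Per(n) with p·a = a. -/
noncomputable section

open Equiv

def diagR (n : ℕ) : Submodule ℝ (Fin n → ℝ) := Submodule.span ℝ {(fun _ => 1 : Fin n → ℝ)}

abbrev LambdaR (n : ℕ) := (Fin n → ℝ) ⧸ diagR n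

def permLinR (n : ℕ) (p : Equiv.Perm (Fin n)) : (Fin n → ℝ) ≃ₗ[ℝ] (Fin n → ℝ) :=
  LinearEquiv.funCongrLeft ℝ ℝ p.symm

lemma diagR_map (n : ℕ) (p : Equiv.Perm (Fin n)) :
    Submodule.map (permLinR n p : (Fin n → ℝ) →ₗ[ℝ] (Fin n → ℝ)) (diagR n) = diagR n := by
  rw [diagR, Submodule.map_span, Set.image_singleton]
  rfl

def permQR (n : ℕ) (p : Equiv.Perm (Fin n)) : LambdaR n ≃ₗ[ℝ] LambdaR n :=
  Submodule.Quotient.equiv (diagR n) (diagR n) (permLinR n p) (diagR_map n p)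

lemma permQR_mk (n : ℕ) (p : Equiv.Perm (Fin n)) (x : Fin n → ℝ) :
    permQR n p (Submodule.Quotient.mk x) = Submodule.Quotient.mk (fun i => x (p.symm i)) := rfl

def phiR (n : ℕ) : Equiv.Perm (Fin n) →* MulAut (Multiplicative (LambdaR n)) where
  toFun p := AddEquiv.toMultiplicative (permQR n p).toAddEquiv
  map_one' := by
    ext x
    obtain ⟨y, rfl⟩ := Submodule.Quotient.mk_surjective _ (x.toAdd)
    rfl
  map_mul' p q := by
    ext x
    obtain ⟨y, rfl⟩ := Submodule.Quotient.mk_surjective _ (x.toAdd)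
    rfl

abbrev GR (n : ℕ) := Multiplicative (LambdaR n) ⋊[phiR n] Equiv.Perm (Fin n)

/-- `G_ℝ^+`: the set of `(v,p)` with `p·v = v`. -/
def GRplus (n : ℕ) : Set (GR n) := {g | phiR n g.right g.left = g.left}

/-- `Λ_ℝ^+`: classes admitting a weakly decreasing representative. -/
def LambdaRplus (n : ℕ) : Set (LambdaR n) :=
  {v | ∃ x : Fin n → ℝ, Antitone x ∧ Submodule.Quotient.mk x = v}

/-!
If `c = (u, s)` conjugates `(a, k)` to `(a', k')`, then `k' = s k s⁻¹`, and `d = a' - s • a` is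
fixed by `k'` (because `a` and `a'` are fixed by `k` and `k'`) while also being the coboundary
`u - k' • u`. Summing its `k'`-translates over one period telescopes to `(orderOf k') • d = 0`, so
`a' = s • a`. A permutation of a weakly decreasing vector that is still weakly decreasing modulo
the diagonal is that same vector, hence `s • a = a`.
-/

instance (n : ℕ) : IsAddTorsionFree (LambdaR n) := .of_isTorsionFree ℝ _

lemma eq_one_of_apply_eq_self_of_eq_div {N : Type*} [CommGroup N] [IsMulTorsionFree N]
    {σ : MulAut N} (hσ : IsOfFinOrder σ) {u d : N} (hfix : σ d = d) (hd : d = u / σ u) :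
    d = 1 := by
  have hstep (j : ℕ) : (σ ^ j) u / (σ ^ (j + 1)) u = d := by
    rw [pow_succ, MulAut.mul_apply, ← map_div, ← hd]
    have hσd : σ ∈ MulAction.stabilizer (MulAut N) d := hfix
    exact pow_mem hσd j
  have hpow : d ^ orderOf σ = 1 := by
    have htel := Finset.prod_range_div' (fun j => (σ ^ j) u) (orderOf σ)
    rwa [Finset.prod_congr rfl fun j _ => hstep j, Finset.prod_const, Finset.card_range,
      pow_zero, pow_orderOf_eq_one, div_self'] at htel
  exact (pow_eq_one_iff_left hσ.orderOf_pos.ne').mp hpow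

lemma SemidirectProduct.exists_conj_right_of_isConj {N G : Type*} [CommGroup N]
    [IsMulTorsionFree N] [Group G] {φ : G →* MulAut N} {g g' : N ⋊[φ] G}
    (hg : φ g.right g.left = g.left) (hg' : φ g'.right g'.left = g'.left)
    (hfin : IsOfFinOrder g'.right) (hconj : IsConj g g') :
    ∃ s : G, g'.right = s * g.right * s⁻¹ ∧ g'.left = φ s g.left := by
  obtain ⟨c, hc⟩ := isConj_iff.mp hconj
  have hcg : c * g = g' * c := by rw [← hc, inv_mul_cancel_right]
  have hright : c.right * g.right = g'.right * c.right := congrArg right hcg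
  have hleft : c.left * φ c.right g.left = g'.left * φ g'.right c.left := congrArg left hcg
  have hfix : φ g'.right (g'.left / φ c.right g.left) = g'.left / φ c.right g.left := by
    rw [map_div, hg', ← MulAut.mul_apply, ← map_mul, ← hright, map_mul, MulAut.mul_apply, hg]
  have hcob : g'.left / φ c.right g.left = c.left / φ g'.right c.left := by
    rw [div_eq_div_iff_mul_eq_mul, mul_comm, hleft, mul_comm]
  refine ⟨c.right, eq_mul_inv_of_mul_eq hright.symm, ?_⟩
  exact div_eq_one.mp (eq_one_of_apply_eq_self_of_eq_div (φ.isOfFinOrder hfin) hfix hcob)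

lemma antitone_of_mk_mem_LambdaRplus {n : ℕ} {x : Fin n → ℝ}
    (hx : (Submodule.Quotient.mk x : LambdaR n) ∈ LambdaRplus n) : Antitone x := by
  obtain ⟨y, hy, hyx⟩ := hx
  obtain ⟨c, hc⟩ := Submodule.mem_span_singleton.mp ((Submodule.Quotient.eq _).mp hyx)
  intro i j hij
  have hci := congrFun hc i
  have hcj := congrFun hc j
  simp only [Pi.smul_apply, Pi.sub_apply, smul_eq_mul, mul_one] at hci hcj
  linarith [hy hij]

lemma permQR_eq_self_of_mem_LambdaRplus {n : ℕ} (p : Equiv.Perm (Fin n)) {v : LambdaR n}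
    (hv : v ∈ LambdaRplus n) (hpv : permQR n p v ∈ LambdaRplus n) : permQR n p v = v := by
  obtain ⟨x, hx, rfl⟩ := hv
  rw [permQR_mk] at hpv ⊢
  have hxp : x ∘ p.symm = x ∘ (1 : Equiv.Perm (Fin n)) :=
    Tuple.unique_antitone (antitone_of_mk_mem_LambdaRplus hpv) hx
  exact congrArg Submodule.Quotient.mk hxp

theorem conj_in_GRplus_general (n : ℕ) (g g' : GR n)
    (hg : g ∈ GRplus n) (hg' : g' ∈ GRplus n)
    (ha : g.left.toAdd ∈ LambdaRplus n) (ha' : g'.left.toAdd ∈ LambdaRplus n)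
    (hconj : IsConj g g') :
    g'.left = g.left ∧
      ∃ p : Equiv.Perm (Fin n),
        g'.right = p * g.right * p⁻¹ ∧ phiR n p g.left = g.left := by
  obtain ⟨s, hk, hs⟩ :=
    SemidirectProduct.exists_conj_right_of_isConj hg hg' (isOfFinOrder_of_finite _) hconj
  rw [hs] at ha'
  have hfix : phiR n s g.left = g.left :=
    Multiplicative.toAdd.injective (permQR_eq_self_of_mem_LambdaRplus s ha ha')
  exact ⟨hs.trans hfix, s, hk, hfix⟩

/-- if `(a,k), (a',k') ∈ G_ℝ^+` with `a, a'` admitting weakly decreasing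
lifts are conjugate in `G_ℝ`, then `a = a'` and `k' = p k p⁻¹` for some `p` fixing `a`. -/
theorem conj_in_GRplus (n : ℕ) (hn : 2 ≤ n) (g g' : GR n)
    (hg : g ∈ GRplus n) (hg' : g' ∈ GRplus n)
    (ha : g.left.toAdd ∈ LambdaRplus n) (ha' : g'.left.toAdd ∈ LambdaRplus n)
    (hconj : IsConj g g') :
    g'.left = g.left ∧
      ∃ p : Equiv.Perm (Fin n),
        g'.right = p * g.right * p⁻¹ ∧ phiR n p g.left = g.left :=
  conj_in_GRplus_general n g g' hg hg' ha ha' hconj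
end
end

section
/- For every permutation p of {1,…,n} (acting on ℝ^n by permuting coordinates) and every integer vector v ∈ ℤ^n, the orthogonal projection w of v onto the fixed space Eig(p,1) = {x ∈ ℝ^n : p·x = x} satisfies n!·w ∈ ℤ^n. (Consequently the length functions l_1,…,l_{n−1} are integer-valued on G = (ℤ^n/Δ_ℤ) ⋊ Per(n).) -/
noncomputable section

/-- Permutation of coordinates as a linear automorphism of Euclidean `ℝ^n`:
`(p • x) i = x (p⁻¹ i)`. -/
def permEuc (n : ℕ) (p : Equiv.Perm (Fin n)) :
    EuclideanSpace ℝ (Fin n) ≃ₗ[ℝ] EuclideanSpace ℝ (Fin n) :=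
  ((WithLp.linearEquiv 2 ℝ (Fin n → ℝ)).trans
    (LinearEquiv.funCongrLeft ℝ ℝ p.symm)).trans
    (WithLp.linearEquiv 2 ℝ (Fin n → ℝ)).symm

/-- The fixed space `Eig(p,1) = {x ∈ ℝ^n : p·x = x}` of a coordinate permutation. -/
def fixedSubmodule (n : ℕ) (p : Equiv.Perm (Fin n)) :
    Submodule ℝ (EuclideanSpace ℝ (Fin n)) :=
  LinearMap.ker ((LinearMap.id : EuclideanSpace ℝ (Fin n) →ₗ[ℝ] _) - (permEuc n p).toLinearMap)

/-!
The fixed space of `p` is the space of vectors invariant under the cyclic group `H = ⟨p⟩`.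
Since each `q ∈ H` permutes coordinates orthogonally, the orthogonal projection onto it is the
average `|H|⁻¹ • ∑_{q ∈ H} v ∘ q`: this average is `H`-invariant, and `v` minus it is orthogonal
to every invariant `u` because `⟪v ∘ q, u⟫ = ⟪v, u⟫`. Hence `|H| • w` is an integer vector, and
`|H|` divides `|Per(n)| = n!` by Lagrange.
-/

section GroupSum

variable {ι R : Type*} (G : Subgroup (Equiv.Perm ι)) [Fintype G]

def groupSum [AddCommMonoid R] (f : ι → R) (i : ι) : R :=
  ∑ q : G, f ((q : Equiv.Perm ι) i)

theorem groupSum_apply_of_mem [AddCommMonoid R] (f : ι → R) {g : Equiv.Perm ι} (hg : g ∈ G)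
    (i : ι) : groupSum G f (g i) = groupSum G f i :=
  Fintype.sum_equiv (Equiv.mulRight ⟨g, hg⟩) _ _ fun _ => rfl

theorem sum_groupSum_mul [Fintype ι] [CommSemiring R] (f u : ι → R)
    (hu : ∀ g ∈ G, ∀ i, u (g i) = u i) :
    ∑ i, groupSum G f i * u i = Nat.card G * ∑ i, f i * u i := by
  calc ∑ i, groupSum G f i * u i
      = ∑ q : G, ∑ i, f ((q : Equiv.Perm ι) i) * u ((q : Equiv.Perm ι) i) := by
        simp only [groupSum, Finset.sum_mul]
        rw [Finset.sum_comm]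
        refine Finset.sum_congr rfl fun q _ => Finset.sum_congr rfl fun i _ => ?_
        rw [hu q q.2]
    _ = ∑ _q : G, ∑ i, f i * u i :=
        Finset.sum_congr rfl fun q _ => Equiv.sum_comp (q : Equiv.Perm ι) fun i => f i * u i
    _ = Nat.card G * ∑ i, f i * u i := by
        rw [Finset.sum_const, Finset.card_univ, nsmul_eq_mul, Nat.card_eq_fintype_card]

end GroupSum

section FixedSubmodule

variable {n : ℕ} {p : Equiv.Perm (Fin n)}

theorem mem_fixedSubmodule_iff {x : EuclideanSpace ℝ (Fin n)} :
    x ∈ fixedSubmodule n p ↔ ∀ i, x (p i) = x i := by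
  simp only [fixedSubmodule, LinearMap.mem_ker, LinearMap.sub_apply, LinearMap.id_apply,
    LinearEquiv.coe_coe, sub_eq_zero, PiLp.ext_iff]
  change (∀ i, x i = x (p⁻¹ i)) ↔ _
  constructor
  · intro h i
    simpa using h (p i)
  · intro h i
    simpa using h (p⁻¹ i)

theorem mem_fixedSubmodule_iff_forall_mem_zpowers {x : EuclideanSpace ℝ (Fin n)} :
    x ∈ fixedSubmodule n p ↔ ∀ q ∈ Subgroup.zpowers p, ∀ i, x (q i) = x i := by
  rw [mem_fixedSubmodule_iff]
  refine ⟨fun hx q hq i => ?_, fun hx => hx p (Subgroup.mem_zpowers p)⟩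
  obtain ⟨k, rfl⟩ := mem_powers_iff_mem_zpowers.2 hq
  rw [Equiv.Perm.coe_pow, (Function.Semiconj.iterate_right (gb := id) hx k) i,
    Function.iterate_id, id]

theorem orthogonalProjectionOnto_fixedSubmodule (x : EuclideanSpace ℝ (Fin n)) :
    (Submodule.orthogonalProjectionOnto (fixedSubmodule n p) x : EuclideanSpace ℝ (Fin n)) =
      (Nat.card (Subgroup.zpowers p) : ℝ)⁻¹ • WithLp.toLp 2 (groupSum (Subgroup.zpowers p) x) := by
  apply Submodule.eq_starProjection_of_mem_of_inner_eq_zero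
  · rw [mem_fixedSubmodule_iff]
    intro i
    simp [groupSum_apply_of_mem _ _ (Subgroup.mem_zpowers p)]
  · intro u hu
    rw [mem_fixedSubmodule_iff_forall_mem_zpowers] at hu
    have hG : (Nat.card (Subgroup.zpowers p) : ℝ) ≠ 0 := Nat.cast_ne_zero.2 Nat.card_pos.ne'
    simp only [PiLp.inner_apply, PiLp.sub_apply, PiLp.smul_apply, smul_eq_mul,
      RCLike.inner_apply, conj_trivial]
    calc ∑ i, u i * (x i - (Nat.card (Subgroup.zpowers p) : ℝ)⁻¹ * groupSum _ x i)
        = ∑ i, x i * u i -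
            (Nat.card (Subgroup.zpowers p) : ℝ)⁻¹ * ∑ i, groupSum (Subgroup.zpowers p) x i * u i := by
          rw [Finset.mul_sum, ← Finset.sum_sub_distrib]
          exact Finset.sum_congr rfl fun i _ => by ring
      _ = 0 := by rw [sum_groupSum_mul _ _ _ hu, inv_mul_cancel_left₀ hG, sub_self]

end FixedSubmodule

/-- the orthogonal projection `w` of an integer vector `v ∈ ℤ^n` onto the
fixed space of a coordinate permutation satisfies `n! · w ∈ ℤ^n`. -/
theorem factorial_smul_orthogonalProjection_int (n : ℕ) (p : Equiv.Perm (Fin n))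
    (v : Fin n → ℤ) :
    ∀ i : Fin n, ∃ m : ℤ,
      (n.factorial : ℝ) *
        ((Submodule.orthogonalProjectionOnto (fixedSubmodule n p)
          ((WithLp.linearEquiv 2 ℝ (Fin n → ℝ)).symm (fun j => (v j : ℝ))) :
            EuclideanSpace ℝ (Fin n)) i) = (m : ℝ) := by
  intro i
  obtain ⟨c, hc⟩ : Nat.card (Subgroup.zpowers p) ∣ n.factorial := by
    simpa [Fintype.card_perm] using Subgroup.card_subgroup_dvd_card (Subgroup.zpowers p)
  refine ⟨c * groupSum (Subgroup.zpowers p) v i, ?_⟩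
  rw [orthogonalProjectionOnto_fixedSubmodule, hc]
  simp [groupSum, field]
end
end

section
/- For every permutation p of {1,…,n}, acting on ℝ^n and on ℤ^n by permuting coordinates, one has (1 − p)(ℝ^n) ∩ ℤ^n = (1 − p)(ℤ^n): every integer vector lying in the image of the linear map 1 − p on ℝ^n is of the form w − p·w for some integer vector w ∈ ℤ^n. -/
/-- for a coordinate permutation `p` of `ℝ^n` (with `(p·x) i = x (p⁻¹ i)`),
an integer vector lies in the image of `1 - p` on `ℝ^n` if and only if it has the form
`w - p·w` for an integer vector `w`; i.e. `(1 - p)(ℝ^n) ∩ ℤ^n = (1 - p)(ℤ^n)`. -/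
theorem int_image_one_sub_perm (n : ℕ) (p : Equiv.Perm (Fin n)) :
    {v : Fin n → ℤ | ∃ x : Fin n → ℝ, ∀ i, (v i : ℝ) = x i - x (p.symm i)} =
    {v : Fin n → ℤ | ∃ w : Fin n → ℤ, ∀ i, v i = w i - w (p.symm i)} := by
  ext v
  simp only [Set.mem_setOf_eq]
  constructor
  · rintro ⟨x, hx⟩
    refine ⟨fun i => ⌊x i⌋, fun i => ?_⟩
    have h : x i = x (p.symm i) + (v i : ℝ) := by linarith [hx i]
    simp only [h, Int.floor_add_intCast]
    ring
  · rintro ⟨w, hw⟩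
    exact ⟨fun i => (w i : ℝ), fun i => by rw [hw i]; push_cast; ring⟩
end

section
/- Let V be a ℚ-vector space of dimension r ≥ 1, V_ℝ = V ⊗ ℝ, and let α_1,…,α_r ∈ Hom(V,ℚ) be linearly independent linear functionals (extended to V_ℝ). Let C = {v ∈ V_ℝ : α_1(v) > 0, …, α_r(v) > 0} and let Σ ⊂ V be a lattice, i.e. a finitely generated subgroup which spans V over ℚ. Then there exist a finite subset S ⊂ Σ and elements a_1,…,a_r ∈ Σ such that C ∩ Σ is exactly the set of all vectors of the form v = v_0 + k_1·a_1 + … + k_r·a_r with v_0 ∈ S and k_1,…,k_r ∈ ℕ_0, and moreover v_0 and k_1,…,k_r are uniquely determined by v. -/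
/-!
The functionals `α` are the coordinate functionals of a basis `e` of `V`. Since `L` spans `V`,
suitable positive multiples `aᵢ = nᵢ • eᵢ` lie in `L`. A lattice point `v` of the cone then
decomposes uniquely as `v₀ + ∑ kᵢ • aᵢ`, where `kᵢ` is the number of whole periods `αᵢ(aᵢ)` lying
strictly below `αᵢ(v)` and `v₀` lies in the half-open box `0 < αᵢ ≤ αᵢ(aᵢ)`. The lattice points of
that box form a finite set: a finitely generated subgroup of `ℚ` lies in some `(1/N)ℤ`, so each
`αᵢ(L)` meets a bounded interval in finitely many points, and the coordinates determine the point.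
-/

open Module Set Submodule

theorem AddSubgroup.FG.map {G H : Type*} [AddGroup G] [AddGroup H] {L : AddSubgroup G}
    (hL : L.FG) (f : G →+ H) : (L.map f).FG := by
  classical
  obtain ⟨T, rfl⟩ := hL
  exact ⟨T.image f, by rw [AddMonoidHom.map_closure, Finset.coe_image]⟩

theorem AddSubgroup.FG.exists_le_zmultiples_inv_natCast {H : AddSubgroup ℚ} (hH : H.FG) :
    ∃ N : ℕ, 0 < N ∧ H ≤ AddSubgroup.zmultiples (N⁻¹ : ℚ) := by
  obtain ⟨T, rfl⟩ := hH
  have hN : 0 < ∏ t ∈ T, t.den := Finset.prod_pos fun t _ => t.pos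
  refine ⟨_, hN, (AddSubgroup.closure_le _).2 fun t ht => ?_⟩
  obtain ⟨m, hm⟩ := Finset.dvd_prod_of_mem Rat.den ht
  have hm0 : (m : ℚ) ≠ 0 := by rintro h; simp_all
  refine AddSubgroup.mem_zmultiples_iff.2 ⟨t.num * m, ?_⟩
  rw [hm, zsmul_eq_mul]
  push_cast
  field_simp
  rw [mul_comm, Rat.mul_den_eq_num]

theorem AddSubgroup.FG.finite_inter_Icc {H : AddSubgroup ℚ} (hH : H.FG) (a b : ℚ) :
    ((H : Set ℚ) ∩ Icc a b).Finite := by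
  obtain ⟨N, hN, hle⟩ := hH.exists_le_zmultiples_inv_natCast
  have hN' : (0 : ℚ) < N := by exact_mod_cast hN
  refine ((Set.finite_Icc ⌈a * N⌉ ⌊b * N⌋).image fun z : ℤ => z • (N⁻¹ : ℚ)).subset ?_
  rintro q ⟨hq, hqa, hqb⟩
  obtain ⟨z, rfl⟩ := AddSubgroup.mem_zmultiples_iff.1 (hle hq)
  rw [zsmul_eq_mul, ← div_eq_mul_inv] at hqa hqb
  exact ⟨z, ⟨Int.ceil_le.2 ((le_div_iff₀ hN').1 hqa), Int.le_floor.2 ((div_le_iff₀ hN').1 hqb)⟩,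
    rfl⟩

theorem AddSubgroup.exists_nsmul_mem_of_mem_span_rat {V : Type*} [AddCommGroup V] [Module ℚ V]
    {L : AddSubgroup V} {x : V} (hx : x ∈ span ℚ (L : Set V)) : ∃ n : ℕ, 0 < n ∧ n • x ∈ L := by
  induction hx using Submodule.span_induction with
  | mem x hx => exact ⟨1, one_pos, by rwa [one_nsmul]⟩
  | zero => exact ⟨1, one_pos, by rw [smul_zero]; exact L.zero_mem⟩
  | add x y _ _ hx hy =>
    obtain ⟨m, hm, hmx⟩ := hx
    obtain ⟨n, hn, hny⟩ := hy
    refine ⟨m * n, mul_pos hm hn, ?_⟩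
    rw [smul_add, mul_nsmul, mul_nsmul']
    exact L.add_mem (L.nsmul_mem hmx n) (L.nsmul_mem hny m)
  | smul q x _ hx =>
    obtain ⟨n, hn, hnx⟩ := hx
    refine ⟨q.den * n, mul_pos q.pos hn, ?_⟩
    have hq : (q.den * n) • (q • x) = q.num • (n • x) := by
      rw [← Nat.cast_smul_eq_nsmul ℚ, ← Nat.cast_smul_eq_nsmul ℚ n, ← Int.cast_smul_eq_zsmul ℚ,
        smul_smul, smul_smul, Nat.cast_mul, mul_right_comm, Rat.den_mul_eq_num]
    rw [hq]
    exact L.zsmul_mem hnx _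

theorem LinearIndependent.exists_basis_coord_eq {K V ι : Type*} [Field K] [AddCommGroup V]
    [Module K V] [FiniteDimensional K V] [Fintype ι] {α : ι → Dual K V}
    (hα : LinearIndependent K α) (hcard : Fintype.card ι = finrank K V) :
    ∃ e : Basis ι K V, ∀ i, e.coord i = α i := by
  classical
  let B : Basis ι K (Dual K V) := Basis.mk hα
    (hα.span_eq_top_of_card_eq_finrank' (by rw [Subspace.dual_finrank_eq, hcard])).ge
  refine ⟨B.dualBasis.map (evalEquiv K V).symm, fun i => LinearMap.ext fun v => ?_⟩
  simp [B]

section ConeDecomposition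

variable {ι V G : Type*} [Fintype ι] [AddCommGroup V] [AddCommGroup G] [LinearOrder G]
  [IsOrderedAddMonoid G]

theorem existsUnique_sub_nsmul_mem_Ioc [Archimedean G] {d x : G} (hd : 0 < d) (hx : 0 < x) :
    ∃! k : ℕ, x - k • d ∈ Ioc 0 d := by
  obtain ⟨m, hm, hm_unique⟩ := existsUnique_sub_zsmul_mem_Ioc hd x 0
  rw [zero_add] at hm hm_unique
  have hm0 : -1 < m := by
    refine (zsmul_lt_zsmul_iff_left hd).1 ?_
    rw [neg_one_zsmul, neg_lt_iff_pos_add]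
    exact hx.trans_le (sub_le_iff_le_add'.1 hm.2)
  refine ⟨m.toNat, ?_, fun k hk => ?_⟩
  · dsimp only
    rwa [← natCast_zsmul, Int.toNat_of_nonneg (by omega)]
  · have := hm_unique k (by dsimp only at hk ⊢; rwa [natCast_zsmul])
    omega

/-- For `α` dual to `a`, the points of `L` in the half-open parallelepiped spanned by `a`. -/
def fundamentalBox (α : ι → V →+ G) (a : ι → V) (L : AddSubgroup V) : Set V :=
  {s | s ∈ L ∧ ∀ i, α i s ∈ Ioc 0 (α i (a i))}

variable {α : ι → V →+ G} {a : ι → V}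

theorem apply_sum_nsmul_of_pairwise_apply_eq_zero (hdiag : Pairwise fun i j => α j (a i) = 0)
    (k : ι → ℕ) (j : ι) : α j (∑ i, k i • a i) = k j • α j (a j) := by
  rw [map_sum, Finset.sum_eq_single j (fun i _ hij => by rw [map_nsmul, hdiag hij, smul_zero])
    (by simp), map_nsmul]

theorem mem_cone_iff_existsUnique_mem_fundamentalBox [Archimedean G]
    (hdiag : Pairwise fun i j => α j (a i) = 0)
    (hpos : ∀ i, 0 < α i (a i)) {L : AddSubgroup V} (haL : ∀ i, a i ∈ L) (v : V) :
    (v ∈ L ∧ ∀ i, 0 < α i v) ↔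
      ∃! w : V × (ι → ℕ), w.1 ∈ fundamentalBox α a L ∧ v = w.1 + ∑ i, w.2 i • a i := by
  have hsumL (k : ι → ℕ) : ∑ i, k i • a i ∈ L := L.sum_mem fun i _ => L.nsmul_mem (haL i) _
  have heval (w : V) (k : ι → ℕ) (j : ι) :
      α j (w + ∑ i, k i • a i) = α j w + k j • α j (a j) := by
    rw [map_add, apply_sum_nsmul_of_pairwise_apply_eq_zero hdiag]
  constructor
  · rintro ⟨hvL, hv⟩
    choose k hk hk_unique using fun i => existsUnique_sub_nsmul_mem_Ioc (hpos i) (hv i)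
    refine ⟨(v - ∑ i, k i • a i, k),
      ⟨⟨L.sub_mem hvL (hsumL k), fun i => ?_⟩, (sub_add_cancel _ _).symm⟩, ?_⟩
    · rw [map_sub, apply_sum_nsmul_of_pairwise_apply_eq_zero hdiag]
      exact hk i
    rintro ⟨w, m⟩ ⟨⟨-, hw⟩, rfl⟩
    obtain rfl : m = k := funext fun i => hk_unique i (m i) (by
      dsimp only
      rw [heval, add_sub_cancel_right]
      exact hw i)
    simp
  · rintro ⟨⟨w, k⟩, ⟨⟨hwL, hw⟩, rfl⟩, -⟩
    refine ⟨L.add_mem hwL (hsumL k), fun i => ?_⟩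
    rw [heval]
    exact add_pos_of_pos_of_nonneg (hw i).1 (nsmul_nonneg (hpos i).le _)

end ConeDecomposition

theorem fundamentalBox_finite {ι V : Type*} [Finite ι] [AddCommGroup V] {α : ι → V →+ ℚ}
    (hα : Function.Injective fun v i => α i v) {L : AddSubgroup V} (hL : L.FG) (a : ι → V) :
    (fundamentalBox α a L).Finite := by
  refine Finite.of_finite_image ?_ hα.injOn
  refine (Set.Finite.pi fun i => (hL.map (α i)).finite_inter_Icc 0 (α i (a i))).subset ?_
  rintro _ ⟨s, ⟨hsL, hs⟩, rfl⟩ i -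
  exact ⟨⟨s, hsL, rfl⟩, Ioc_subset_Icc_self (hs i)⟩

theorem Module.Basis.exists_finset_add_sum_nsmul_eq {ι V : Type*} [Fintype ι] [AddCommGroup V]
    [Module ℚ V] (e : Basis ι ℚ V) {L : AddSubgroup V} (hL : L.FG)
    (hspan : span ℚ (L : Set V) = ⊤) :
    ∃ S : Finset V, (∀ s ∈ S, s ∈ L) ∧ ∃ a : ι → V, (∀ i, a i ∈ L) ∧
      ∀ v : V, (v ∈ L ∧ ∀ i, 0 < e.coord i v) ↔
        ∃! w : V × (ι → ℕ), w.1 ∈ S ∧ v = w.1 + ∑ i, w.2 i • a i := by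
  choose n hn_pos hnL using fun i =>
    AddSubgroup.exists_nsmul_mem_of_mem_span_rat (hspan ▸ mem_top : e i ∈ span ℚ (L : Set V))
  let α : ι → V →+ ℚ := fun i => (e.coord i).toAddMonoidHom
  have hdiag : Pairwise fun i j => α j (n i • e i) = 0 := fun i j hij => by simp [α, hij]
  have hpos (i : ι) : 0 < α i (n i • e i) := by simp [α, hn_pos]
  have hfin := fundamentalBox_finite (α := α) (fun v w h => e.ext_elem fun i => congr_fun h i) hL
    fun i => n i • e i
  refine ⟨hfin.toFinset, fun s hs => (hfin.mem_toFinset.1 hs).1, fun i => n i • e i, hnL,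
    fun v => ?_⟩
  simp_rw [hfin.mem_toFinset]
  exact mem_cone_iff_existsUnique_mem_fundamentalBox hdiag hpos hnL v

theorem cone_lattice_point_decomposition_general
    (V : Type*) [AddCommGroup V] [Module ℚ V] [FiniteDimensional ℚ V]
    (r : ℕ) (hdim : Module.finrank ℚ V = r)
    (α : Fin r → (V →ₗ[ℚ] ℚ)) (hα : LinearIndependent ℚ α)
    (L : AddSubgroup V) (hfg : L.FG) (hspan : Submodule.span ℚ (L : Set V) = ⊤) :
    ∃ S : Finset V, (∀ s ∈ S, s ∈ L) ∧
      ∃ a : Fin r → V, (∀ i, a i ∈ L) ∧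
        ∀ v : V, (v ∈ L ∧ ∀ i, 0 < α i v) ↔
          ∃! w : V × (Fin r → ℕ), w.1 ∈ S ∧ v = w.1 + ∑ i, w.2 i • a i := by
  obtain ⟨e, he⟩ := hα.exists_basis_coord_eq (by rw [Fintype.card_fin, hdim])
  obtain rfl : (fun i => e.coord i) = α := funext he
  exact e.exists_finset_add_sum_nsmul_eq hfg hspan

/-- Let `V` be a `ℚ`-vector space of dimension `r ≥ 1` and
`α_1, …, α_r` linearly independent functionals on `V`, defining the sharp open cone
`C = {v : α_i(v) > 0 ∀ i}`.  For any lattice `Σ ⊆ V` (finitely generated subgroup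
spanning `V`), there are a finite set `S ⊆ Σ` and `a_1, …, a_r ∈ Σ` such that the
lattice points of `C` are exactly the `v = v₀ + k₁a₁ + … + k_ra_r` with `v₀ ∈ S`,
`k_i ∈ ℕ`, the representation being unique. -/
theorem cone_lattice_point_decomposition
    (V : Type*) [AddCommGroup V] [Module ℚ V] [FiniteDimensional ℚ V]
    (r : ℕ) (hr : 1 ≤ r) (hdim : Module.finrank ℚ V = r)
    (α : Fin r → (V →ₗ[ℚ] ℚ)) (hα : LinearIndependent ℚ α)
    (L : AddSubgroup V) (hfg : L.FG) (hspan : Submodule.span ℚ (L : Set V) = ⊤) :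
    ∃ S : Finset V, (∀ s ∈ S, s ∈ L) ∧
      ∃ a : Fin r → V, (∀ i, a i ∈ L) ∧
        ∀ v : V, (v ∈ L ∧ ∀ i, 0 < α i v) ↔
          ∃! w : V × (Fin r → ℕ), w.1 ∈ S ∧ v = w.1 + ∑ i, w.2 i • a i :=
  cone_lattice_point_decomposition_general V r hdim α hα L hfg hspan
end

section
/- Let A : ℝ^m → ℝ^m be an orthogonal linear map, b ∈ ℝ^m, and let f(x) = A x + b. Let P denote the orthogonal projection of ℝ^m onto the fixed space ker(A − 1) = {x : A x = x}. Then the infimum of ‖f(x) − x‖ over x ∈ ℝ^m equals ‖P b‖ and is attained; the set of minimizers P_f = {x : ‖f(x) − x‖ is minimal} is the nonempty affine subspace {x ∈ ℝ^m : (A − 1)x = P b − b}, which is a translate of ker(A − 1); and f maps P_f into itself, acting on it as the translation x ↦ x + P b. In particular, if f has no fixed point then P b ≠ 0, and P_f is a union of straight lines in the direction P b on each of which f acts by translation. -/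
/-!
Let `K` be the fixed subspace of `A` and `P` the orthogonal projection onto it. Every `A x - x` is
orthogonal to `K` (because `A` preserves inner products and fixes `K`), and in finite dimension the
range of `A - 1` is all of `Kᗮ` by rank–nullity. Hence the orthogonal splitting
`A x + b - x = (A x - x + (b - P b)) + P b` gives
`‖A x + b - x‖² = ‖A x - x + (b - P b)‖² + ‖P b‖²`, and the first term can be made to vanish,
exactly on the fibre `{x | A x - x = P b - b}` of `A - 1`, a translate of `K`.
Since `A` fixes `P b`, this fibre is invariant under `x ↦ A x + b = x + P b`.
-/

open Submodule LinearMap RealInnerProductSpace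

variable {E : Type*} [NormedAddCommGroup E] [InnerProductSpace ℝ E]

theorem LinearMap.setOf_apply_eq_eq_image_add_ker {R M N : Type*} [Ring R] [AddCommGroup M]
    [AddCommGroup N] [Module R M] [Module R N] (f : M →ₗ[R] N) (x₀ : M) :
    {x | f x = f x₀} = (x₀ + ·) '' ker f := by
  ext x
  constructor
  · intro hx
    exact ⟨x - x₀, sub_mem_ker_iff.2 hx, add_sub_cancel x₀ x⟩
  · rintro ⟨v, hv, rfl⟩
    simp [mem_ker.1 hv]

namespace LinearIsometry

variable (A : E →ₗᵢ[ℝ] E)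

def fixedSubspace : Submodule ℝ E := ker (A.toLinearMap - LinearMap.id)

theorem mem_fixedSubspace_iff {x : E} : x ∈ A.fixedSubspace ↔ A x = x := by
  simp [fixedSubspace, sub_eq_zero]

theorem apply_sub_self_mem_orthogonal_fixedSubspace (x : E) : A x - x ∈ A.fixedSubspaceᗮ := by
  rw [mem_orthogonal]
  intro u hu
  calc ⟪u, A x - x⟫ = ⟪A u, A x⟫ - ⟪u, x⟫ := by rw [inner_sub_right, A.mem_fixedSubspace_iff.1 hu]
    _ = 0 := by rw [A.inner_map_map, sub_self]

theorem range_sub_id_eq_orthogonal_fixedSubspace [FiniteDimensional ℝ E] :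
    range (A.toLinearMap - LinearMap.id) = A.fixedSubspaceᗮ := by
  refine eq_of_le_of_finrank_eq ?_ ?_
  · rintro _ ⟨x, rfl⟩
    exact A.apply_sub_self_mem_orthogonal_fixedSubspace x
  · have := (A.toLinearMap - LinearMap.id).finrank_range_add_finrank_ker
    have := A.fixedSubspace.finrank_add_finrank_orthogonal
    rw [fixedSubspace] at *
    omega

variable [FiniteDimensional ℝ E] (b : E)

local notation "P" => A.fixedSubspace.starProjection

theorem exists_apply_sub_self_eq : ∃ x, A x - x = P b - b := by
  have : P b - b ∈ range (A.toLinearMap - LinearMap.id) := by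
    rw [range_sub_id_eq_orthogonal_fixedSubspace, ← neg_sub]
    exact neg_mem (sub_starProjection_mem_orthogonal b)
  exact this

theorem apply_starProjection : A (P b) = P b :=
  A.mem_fixedSubspace_iff.1 (starProjection_apply_mem _ b)

theorem norm_sq_add_sub_self (x : E) :
    ‖A x + b - x‖ ^ 2 = ‖A x - x + (b - P b)‖ ^ 2 + ‖P b‖ ^ 2 := by
  have hperp : A x - x + (b - P b) ∈ A.fixedSubspaceᗮ :=
    add_mem (A.apply_sub_self_mem_orthogonal_fixedSubspace x) (sub_starProjection_mem_orthogonal b)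
  have hsplit : A x + b - x = (A x - x + (b - P b)) + P b := by abel
  rw [hsplit, norm_add_sq_real, inner_left_of_mem_orthogonal (starProjection_apply_mem _ b) hperp]
  ring

theorem norm_starProjection_le (x : E) : ‖P b‖ ≤ ‖A x + b - x‖ := by
  have := A.norm_sq_add_sub_self b x
  nlinarith [sq_nonneg ‖A x - x + (b - P b)‖, norm_nonneg (P b), norm_nonneg (A x + b - x)]

theorem norm_add_sub_self_eq_iff {x : E} : ‖A x + b - x‖ = ‖P b‖ ↔ A x - x = P b - b := by
  rw [← sq_eq_sq₀ (norm_nonneg _) (norm_nonneg _), norm_sq_add_sub_self, add_eq_right,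
    sq_eq_zero_iff, norm_eq_zero, add_eq_zero_iff_eq_neg, neg_sub]

theorem isLeast_norm_add_sub_self : IsLeast (Set.range fun x => ‖A x + b - x‖) ‖P b‖ := by
  obtain ⟨x₀, hx₀⟩ := A.exists_apply_sub_self_eq b
  refine ⟨⟨x₀, (A.norm_add_sub_self_eq_iff b).2 hx₀⟩, ?_⟩
  rintro _ ⟨x, rfl⟩
  exact A.norm_starProjection_le b x

theorem setOf_forall_norm_add_sub_self_le_eq :
    {x | ∀ y, ‖A x + b - x‖ ≤ ‖A y + b - y‖} = {x | A x - x = P b - b} := by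
  ext x
  show (∀ y, ‖A x + b - x‖ ≤ ‖A y + b - y‖) ↔ A x - x = P b - b
  rw [← A.norm_add_sub_self_eq_iff b]
  obtain ⟨⟨x₀, hx₀⟩, -⟩ := A.isLeast_norm_add_sub_self b
  constructor
  · intro hx
    exact le_antisymm (hx₀ ▸ hx x₀) (A.norm_starProjection_le b x)
  · intro hx y
    exact hx ▸ A.norm_starProjection_le b y

end LinearIsometry

/-- for `f(x) = A x + b` with `A` an orthogonal linear map of `ℝ^m` and
`P` the orthogonal projection onto `ker (A - 1)`: the infimum of `‖f x - x‖` is `‖P b‖`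
and is attained; the minimizing set `P_f` equals `{x : (A - 1) x = P b - b}`, is a
nonempty translate of `ker (A - 1)`, is mapped into itself by `f`, on which `f` acts as
translation by `P b`; and if `f` has no fixed point, then `P b ≠ 0`. -/
theorem affine_isometry_min_displacement (m : ℕ)
    (A : EuclideanSpace ℝ (Fin m) ≃ₗᵢ[ℝ] EuclideanSpace ℝ (Fin m))
    (b : EuclideanSpace ℝ (Fin m)) :
    letI K : Submodule ℝ (EuclideanSpace ℝ (Fin m)) :=
      LinearMap.ker (A.toLinearEquiv.toLinearMap -
        (LinearMap.id : EuclideanSpace ℝ (Fin m) →ₗ[ℝ] _))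
    letI Pb : EuclideanSpace ℝ (Fin m) := (K.orthogonalProjectionOnto b : EuclideanSpace ℝ (Fin m))
    letI Pf : Set (EuclideanSpace ℝ (Fin m)) :=
      {x | ∀ y, ‖A x + b - x‖ ≤ ‖A y + b - y‖}
    IsLeast (Set.range fun x => ‖A x + b - x‖) ‖Pb‖ ∧
    Pf = {x | A x - x = Pb - b} ∧
    Pf.Nonempty ∧
    (∃ x₀, Pf = (fun v => x₀ + v) '' (K : Set (EuclideanSpace ℝ (Fin m)))) ∧
    (∀ x ∈ Pf, A x + b = x + Pb ∧ A x + b ∈ Pf) ∧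
    ((∀ x, A x + b ≠ x) → Pb ≠ 0) := by
  set T := A.toLinearEquiv.toLinearMap - LinearMap.id
  set Pb := ((ker T).orthogonalProjectionOnto b : EuclideanSpace ℝ (Fin m))
  set Pf := {x | ∀ y, ‖A x + b - x‖ ≤ ‖A y + b - y‖}
  have hPf : Pf = {x | A x - x = Pb - b} := A.toLinearIsometry.setOf_forall_norm_add_sub_self_le_eq b
  obtain ⟨x₀, hx₀⟩ : ∃ x₀, A x₀ - x₀ = Pb - b := A.toLinearIsometry.exists_apply_sub_self_eq b
  have hAPb : A Pb = Pb := A.toLinearIsometry.apply_starProjection b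
  refine ⟨A.toLinearIsometry.isLeast_norm_add_sub_self b, hPf, ⟨x₀, hPf ▸ hx₀⟩, ⟨x₀, ?_⟩, ?_, ?_⟩
  · rw [hPf, ← hx₀]
    exact T.setOf_apply_eq_eq_image_add_ker x₀
  · intro x hx
    rw [hPf] at hx ⊢
    replace hx : A x - x = Pb - b := hx
    have hfx : A x + b = x + Pb := by linear_combination (norm := module) hx
    refine ⟨hfx, ?_⟩
    show A (A x + b) - (A x + b) = Pb - b
    rw [hfx, map_add, hAPb, add_sub_add_right_eq_sub]
    exact hx
  · intro hfree hPb0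
    exact hfree x₀ (by linear_combination (norm := module) hx₀ + hPb0)
end

section
/- (Theorem 1, algebraic form) With notation as in the context, det(I_N − A_1 u + A_2 u^2 − … + (−1)^{n−1} A_{n−1} u^{n−1} + (−1)^n u^n I_N) = Π_{i=1}^n det(I_N − λ(\bar{s}_i) u) as polynomials in u. (The left-hand side is the polynomial appearing in the Ihara type formula Z_+(X_Γ,u) = det(I_N − A_1 u + … + (−1)^n u^n I_N) for the positive-geodesic zeta function.) -/
noncomputable section

open Polynomial

def diagZ (n : ℕ) : Submodule ℤ (Fin n → ℤ) := Submodule.span ℤ {(fun _ => 1 : Fin n → ℤ)}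

/-- `Λ = ℤ^n / Δ_ℤ`. -/
abbrev LambdaZ (n : ℕ) := (Fin n → ℤ) ⧸ diagZ n

/-- The class `s_i` of the standard basis vector `e_i` in `Λ`. -/
def sgen (n : ℕ) (i : Fin n) : LambdaZ n := Submodule.Quotient.mk (Pi.single i 1)

def typeLin (n : ℕ) : (Fin n → ℤ) →ₗ[ℤ] ZMod n where
  toFun x := ∑ i, (x i : ZMod n)
  map_add' x y := by simp [Finset.sum_add_distrib]
  map_smul' c x := by simp [Finset.mul_sum]

/-- The type of an element of `Λ`: the sum of the coordinates mod `n`. -/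
def typeQ (n : ℕ) : LambdaZ n →ₗ[ℤ] ZMod n :=
  Submodule.liftQ (diagZ n) (typeLin n)
    (by
      rw [diagZ, Submodule.span_le]
      intro x hx
      simp only [Set.mem_singleton_iff] at hx
      subst hx
      simp [typeLin])

variable {n : ℕ} (Γ : AddSubgroup (LambdaZ n))

/-- `Q = Λ/Γ`. -/
abbrev Qgrp (Γ : AddSubgroup (LambdaZ n)) := LambdaZ n ⧸ Γ

/-- The image `\bar s_i` of `s_i` in `Q = Λ/Γ`. -/
def sbar (Γ : AddSubgroup (LambdaZ n)) (i : Fin n) : Qgrp Γ :=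
  QuotientAddGroup.mk (sgen n i)

/-- The matrix of the regular representation operator `λ(q)` on functions `Q → ℂ`,
with entries in `ℂ[X]`. -/
def regMat (Γ : AddSubgroup (LambdaZ n)) [DecidableEq (Qgrp Γ)] (q : Qgrp Γ) :
    Matrix (Qgrp Γ) (Qgrp Γ) (Polynomial ℂ) :=
  Matrix.of fun x y => if x = q + y then (1 : Polynomial ℂ) else 0

/-- The type-`i` adjacency operator `A_i = ∑_{|T| = i} λ(∑_{j ∈ T} \bar s_j)`. -/
def adjMat (Γ : AddSubgroup (LambdaZ n)) [DecidableEq (Qgrp Γ)] (i : ℕ) :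
    Matrix (Qgrp Γ) (Qgrp Γ) (Polynomial ℂ) :=
  ∑ T ∈ Finset.univ.powersetCard i, regMat Γ (∑ j ∈ T, sbar Γ j)

/-! The regular representation `λ` extends to an algebra map from the commutative group algebra
`ℂ[u][Q]`. There `∏ᵢ (1 - u·[s̄ᵢ])` expands as `∑ₖ (-u)ᵏ ∑_{|T| = k} [∑_{j ∈ T} s̄ⱼ]`, which `λ`
maps to `∑ₖ (-u)ᵏ Aₖ`; the extreme terms are `A₀ = λ(0) = 1` and `Aₙ = λ(s̄₁ + ⋯ + s̄ₙ) = λ(0) = 1`.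
Since `det ∘ λ` is multiplicative, the determinant of the product is the product of the
determinants. -/

theorem AddMonoidAlgebra.prod_one_sub_single {ι k G : Type*} [CommRing k] [AddCommMonoid G]
    (s : Finset ι) (g : ι → G) (r : k) :
    ∏ i ∈ s, (1 - AddMonoidAlgebra.single (g i) r) =
      ∑ T ∈ s.powerset, AddMonoidAlgebra.single (∑ i ∈ T, g i) ((-r) ^ T.card) := by
  have h : ∀ i,
      (1 - AddMonoidAlgebra.single (g i) r) = AddMonoidAlgebra.single (g i) (-r) + 1 := by
    intro i
    rw [sub_eq_neg_add, AddMonoidAlgebra.single_neg]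
  classical
  simp_rw [h, Finset.prod_add, Finset.prod_const_one, mul_one, AddMonoidAlgebra.prod_single,
    Finset.prod_const]

theorem Finset.sum_range_succ_eq_add_sum_Icc_add {M : Type*} [AddCommMonoid M] {n : ℕ}
    (hn : 1 ≤ n) (f : ℕ → M) :
    ∑ i ∈ Finset.range (n + 1), f i = f 0 + ∑ i ∈ Finset.Icc 1 (n - 1), f i + f n := by
  have hrange : Finset.range (n + 1) = insert 0 (insert n (Finset.Icc 1 (n - 1))) := by
    ext k
    simp only [Finset.mem_range, Finset.mem_insert, Finset.mem_Icc]
    omega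
  rw [hrange, Finset.sum_insert (by simp only [Finset.mem_insert, Finset.mem_Icc]; omega),
    Finset.sum_insert (by simp only [Finset.mem_Icc]; omega)]
  abel

theorem sum_sbar_eq_zero : ∑ i, sbar Γ i = 0 := by
  have hsum : ∑ i : Fin n, (Pi.single i 1 : Fin n → ℤ) = fun _ => 1 := by
    ext j
    simp [Finset.sum_apply, Pi.single_apply]
  have hsgen : ∑ i, sgen n i = 0 := by
    simp only [sgen, ← Submodule.mkQ_apply, ← map_sum, hsum]
    rw [Submodule.mkQ_apply, Submodule.Quotient.mk_eq_zero]
    exact Submodule.subset_span rfl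
  simp only [sbar, ← QuotientAddGroup.mk'_apply, ← map_sum, hsgen, map_zero]

section RegularRepresentation

variable [DecidableEq (Qgrp Γ)]

theorem regMat_zero : regMat Γ 0 = 1 := by
  ext x y
  simp [regMat, Matrix.one_apply]

theorem adjMat_zero : adjMat Γ 0 = 1 := by
  simp [adjMat, regMat_zero]

theorem adjMat_self : adjMat Γ n = 1 := by
  have hcard : (Finset.univ : Finset (Fin n)).powersetCard n = {Finset.univ} := by
    simpa using Finset.powersetCard_self (Finset.univ : Finset (Fin n))
  rw [adjMat, hcard, Finset.sum_singleton, sum_sbar_eq_zero, regMat_zero]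

variable [Fintype (Qgrp Γ)]

theorem regMat_add (a b : Qgrp Γ) : regMat Γ (a + b) = regMat Γ a * regMat Γ b := by
  ext x y
  simp only [regMat, Matrix.mul_apply, Matrix.of_apply]
  rw [Finset.sum_eq_single (b + y)]
  · simp [add_assoc]
  · intro z _ hz
    simp [hz]
  · simp

def regMonoidHom : Multiplicative (Qgrp Γ) →* Matrix (Qgrp Γ) (Qgrp Γ) (Polynomial ℂ) where
  toFun q := regMat Γ q.toAdd
  map_one' := regMat_zero Γ
  map_mul' _ _ := regMat_add Γ _ _

def regAlgHom : AddMonoidAlgebra (Polynomial ℂ) (Qgrp Γ) →ₐ[Polynomial ℂ]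
    Matrix (Qgrp Γ) (Qgrp Γ) (Polynomial ℂ) :=
  AddMonoidAlgebra.lift _ _ _ (regMonoidHom Γ)

theorem regAlgHom_single (q : Qgrp Γ) (c : Polynomial ℂ) :
    regAlgHom Γ (AddMonoidAlgebra.single q c) = c • regMat Γ q := by
  simp [regAlgHom, AddMonoidAlgebra.lift_single, regMonoidHom]

theorem regAlgHom_prod_one_sub_single_sbar :
    regAlgHom Γ (∏ i, (1 - AddMonoidAlgebra.single (sbar Γ i) Polynomial.X)) =
      ∑ i ∈ Finset.range (n + 1), ((-1 : Polynomial ℂ) ^ i * Polynomial.X ^ i) • adjMat Γ i := by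
  rw [AddMonoidAlgebra.prod_one_sub_single, map_sum, Finset.sum_powerset, Finset.card_univ,
    Fintype.card_fin]
  refine Finset.sum_congr rfl fun i _ => ?_
  rw [adjMat, Finset.smul_sum]
  refine Finset.sum_congr rfl fun T hT => ?_
  rw [regAlgHom_single, (Finset.mem_powersetCard.mp hT).2, neg_pow]

theorem det_regAlgHom_prod {ι : Type*} (s : Finset ι)
    (f : ι → AddMonoidAlgebra (Polynomial ℂ) (Qgrp Γ)) :
    (regAlgHom Γ (∏ i ∈ s, f i)).det = ∏ i ∈ s, (regAlgHom Γ (f i)).det :=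
  map_prod (Matrix.detMonoidHom.comp (regAlgHom Γ).toMonoidHom) f s

end RegularRepresentation

theorem ihara_det_factorization_general (n : ℕ) (hn : 2 ≤ n)
    (Γ : AddSubgroup (LambdaZ n)) [Fintype (Qgrp Γ)] [DecidableEq (Qgrp Γ)] :
    Matrix.det ((1 : Matrix (Qgrp Γ) (Qgrp Γ) (Polynomial ℂ)) +
        (∑ i ∈ Finset.Icc 1 (n - 1),
          ((-1 : Polynomial ℂ) ^ i * Polynomial.X ^ i) • adjMat Γ i) +
        ((-1 : Polynomial ℂ) ^ n * Polynomial.X ^ n) •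
          (1 : Matrix (Qgrp Γ) (Qgrp Γ) (Polynomial ℂ))) =
    ∏ i : Fin n,
      Matrix.det ((1 : Matrix (Qgrp Γ) (Qgrp Γ) (Polynomial ℂ)) -
        (Polynomial.X : Polynomial ℂ) • regMat Γ (sbar Γ i)) := by
  have hexpand := regAlgHom_prod_one_sub_single_sbar Γ
  rw [Finset.sum_range_succ_eq_add_sum_Icc_add (by omega), adjMat_zero, adjMat_self, pow_zero,
    pow_zero, one_mul, one_smul] at hexpand
  rw [← hexpand, det_regAlgHom_prod]
  simp only [map_sub, map_one, regAlgHom_single]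

/-- `det(I - A₁u + A₂u² - … + (-1)^{n-1}A_{n-1}u^{n-1} + (-1)^n u^n I)
  = ∏_{i=1}^n det(I - λ(\bar s_i) u)`. -/
theorem ihara_det_factorization (n : ℕ) (hn : 2 ≤ n)
    (Γ : AddSubgroup (LambdaZ n)) [Fintype (Qgrp Γ)] [DecidableEq (Qgrp Γ)]
    (N : ℕ) (hN : Fintype.card (Qgrp Γ) = N)
    (htype : ∀ γ ∈ Γ, typeQ n γ = 0) :
    Matrix.det ((1 : Matrix (Qgrp Γ) (Qgrp Γ) (Polynomial ℂ)) +
        (∑ i ∈ Finset.Icc 1 (n - 1),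
          ((-1 : Polynomial ℂ) ^ i * Polynomial.X ^ i) • adjMat Γ i) +
        ((-1 : Polynomial ℂ) ^ n * Polynomial.X ^ n) •
          (1 : Matrix (Qgrp Γ) (Qgrp Γ) (Polynomial ℂ))) =
    ∏ i : Fin n,
      Matrix.det ((1 : Matrix (Qgrp Γ) (Qgrp Γ) (Polynomial ℂ)) -
        (Polynomial.X : Polynomial ℂ) • regMat Γ (sbar Γ i)) :=
  ihara_det_factorization_general n hn Γ
end
end

section
/- (Theorem 2) With notation as in the context, det(I_N − A_1 u + A_2 u^2 − … + (−1)^{n−1} A_{n−1} u^{n−1} + (−1)^n u^n I_N) = L(Λ/Γ, u), where L(Λ/Γ, u) = Π_{ρ} Π_{j=1}^n (1 − ρ(\bar{s}_j)·u), the outer product running over all characters ρ : Q → ℂ^× of the finite abelian group Q = Λ/Γ; i.e., the positive-geodesic zeta function determinant equals the product of the Langlands L-functions L(ρ,u) = Π_{j=1}^n (1 − ρ_j u) with Satake parameters ρ_j = ρ(\bar{s}_j), which satisfy ρ_1⋯ρ_n = 1. -/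
noncomputable section

open Polynomial

variable {n : ℕ} (Γ : AddSubgroup (LambdaZ n))

/-! ### Auxiliary lemmas -/

section Aux

variable {G : Type*} [AddCommGroup G]

/-- An additive character turns sums into products. -/
lemma addChar_map_sum {M : Type*} [CommMonoid M] (ψ : AddChar G M) {ι : Type*}
    (s : Finset ι) (f : ι → G) :
    ψ (∑ i ∈ s, f i) = ∏ i ∈ s, ψ (f i) := by
  classical
  induction s using Finset.cons_induction with
  | empty => simp
  | cons a s ha ih => rw [Finset.sum_cons, Finset.prod_cons, AddChar.map_add_eq_mul, ih]

/-- The `ℂˣ`-valued characters of an additive commutative group are equivalent to the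
`ℂ`-valued ones. -/
def unitsCharEquiv (G : Type*) [AddCommGroup G] : AddChar G ℂˣ ≃ AddChar G ℂ where
  toFun ρ := (Units.coeHom ℂ).compAddChar ρ
  invFun ψ := AddChar.toMonoidHomEquiv.symm (AddChar.toMonoidHomEquiv ψ).toHomUnits
  left_inv ρ := DFunLike.ext _ _ fun a => Units.ext rfl
  right_inv ψ := by
    ext a
    rfl

lemma unitsCharEquiv_symm_coe (G : Type*) [AddCommGroup G] (ψ : AddChar G ℂ) (a : G) :
    (((unitsCharEquiv G).symm ψ a : ℂˣ) : ℂ) = ψ a := rfl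

/-- The determinant of a `G`-circulant complex matrix is the product of its eigenvalues,
indexed by the characters of `G`. -/
lemma det_addCirculant [Fintype G] [DecidableEq G] (c : G → ℂ) :
    (Matrix.of fun x y : G => c (x - y)).det =
      ∏ ψ : AddChar G ℂ, ∑ z : G, c z * ψ (-z) := by
  classical
  set b := AddChar.complexBasis G with hb
  rw [← LinearMap.det_toLin' _, ← LinearMap.det_toMatrix b]
  have key : LinearMap.toMatrix b b (Matrix.toLin' (Matrix.of fun x y : G => c (x - y))) =
      Matrix.diagonal (fun ψ : AddChar G ℂ => ∑ z : G, c z * ψ (-z)) := by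
    ext ψ φ
    have hf : Matrix.toLin' (Matrix.of fun x y : G => c (x - y)) (b φ) =
        (∑ z : G, c z * φ (-z)) • (b φ) := by
      have hbφ : (b φ : G → ℂ) = ⇑φ := by rw [hb, AddChar.complexBasis_apply]
      funext x
      rw [Matrix.toLin'_apply]
      have : (b φ : G → ℂ) = ⇑φ := hbφ
      rw [this]
      show ∑ y, c (x - y) * φ y = ((∑ z : G, c z * φ (-z)) • ⇑φ) x
      rw [Pi.smul_apply, smul_eq_mul, Finset.sum_mul]
      refine (Fintype.sum_equiv (Equiv.subLeft x) _ _ fun z => ?_).symm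
      show c z * φ (-z) * φ x = c (x - (x - z)) * φ (x - z)
      rw [sub_sub_cancel, sub_eq_add_neg, AddChar.map_add_eq_mul]
      ring
    rw [LinearMap.toMatrix_apply, hf, map_smul, Module.Basis.repr_self]
    rcases eq_or_ne ψ φ with h | h
    · subst h
      simp [Matrix.diagonal_apply_eq]
    · simp [Matrix.diagonal_apply_ne _ h, Finsupp.single_apply, (Ne.symm h)]
  rw [key, Matrix.det_diagonal]

end Aux

/-- the Ihara-type determinant equals the product of the Langlands
`L`-functions `L(ρ,u) = ∏_{j=1}^n (1 - ρ(\bar s_j) u)` over all characters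
`ρ : Q → ℂˣ` of `Q = Λ/Γ`. -/
theorem ihara_det_eq_L_function (n : ℕ) (hn : 2 ≤ n)
    (Γ : AddSubgroup (LambdaZ n)) [Fintype (Qgrp Γ)] [DecidableEq (Qgrp Γ)]
    (N : ℕ) (hN : Fintype.card (Qgrp Γ) = N)
    (htype : ∀ γ ∈ Γ, typeQ n γ = 0) :
    Matrix.det ((1 : Matrix (Qgrp Γ) (Qgrp Γ) (Polynomial ℂ)) +
        (∑ i ∈ Finset.Icc 1 (n - 1),
          ((-1 : Polynomial ℂ) ^ i * Polynomial.X ^ i) • adjMat Γ i) +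
        ((-1 : Polynomial ℂ) ^ n * Polynomial.X ^ n) •
          (1 : Matrix (Qgrp Γ) (Qgrp Γ) (Polynomial ℂ))) =
    ∏ᶠ ρ : AddChar (Qgrp Γ) ℂˣ,
      ∏ j : Fin n, (1 - Polynomial.C ((ρ (sbar Γ j) : ℂˣ) : ℂ) * Polynomial.X) := by
  classical
  -- Basic facts
  have hreg0 : regMat Γ 0 = 1 := by
    ext x y
    simp [regMat, Matrix.one_apply]
  have hs0 : ∑ j : Fin n, sbar Γ j = 0 := by
    have h1 : ∑ j : Fin n, sgen n j = 0 := by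
      have : ∑ j : Fin n, sgen n j =
          Submodule.Quotient.mk (p := diagZ n) (∑ j : Fin n, Pi.single j (1 : ℤ)) :=
        (map_sum (Submodule.mkQ (diagZ n)) (fun j => Pi.single j (1 : ℤ)) Finset.univ).symm
      rw [this, Finset.univ_sum_single]
      rw [Submodule.Quotient.mk_eq_zero]
      exact Submodule.mem_span_singleton_self _
    calc ∑ j : Fin n, sbar Γ j
        = QuotientAddGroup.mk (∑ j : Fin n, sgen n j) := by
          simp [sbar]
      _ = 0 := by rw [h1]; rfl
  have hA0 : adjMat Γ 0 = 1 := by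
    rw [adjMat, Finset.powersetCard_zero, Finset.sum_singleton, Finset.sum_empty, hreg0]
  have hAn : adjMat Γ n = 1 := by
    have hcard : (Finset.univ : Finset (Fin n)).card = n := Finset.card_univ.trans (by simp)
    rw [adjMat]
    have hpc := Finset.powersetCard_self (Finset.univ : Finset (Fin n))
    rw [hcard] at hpc
    rw [hpc]
    rw [Finset.sum_singleton, hs0, hreg0]
  -- Rewrite the LHS matrix as a sum over all subsets of `Fin n`.
  have hM : (1 : Matrix (Qgrp Γ) (Qgrp Γ) (Polynomial ℂ)) +
        (∑ i ∈ Finset.Icc 1 (n - 1),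
          ((-1 : Polynomial ℂ) ^ i * Polynomial.X ^ i) • adjMat Γ i) +
        ((-1 : Polynomial ℂ) ^ n * Polynomial.X ^ n) •
          (1 : Matrix (Qgrp Γ) (Qgrp Γ) (Polynomial ℂ)) =
      ∑ T ∈ (Finset.univ : Finset (Fin n)).powerset,
        ((-1 : Polynomial ℂ) ^ T.card * Polynomial.X ^ T.card) •
          regMat Γ (∑ j ∈ T, sbar Γ j) := by
    rw [Finset.powerset_card_biUnion, Finset.sum_biUnion
      ((Finset.pairwise_disjoint_powersetCard
        (Finset.univ : Finset (Fin n))).set_pairwise _)]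
    have hcard : (Finset.univ : Finset (Fin n)).card = n := by simp
    rw [hcard]
    have hinner : ∀ i ∈ Finset.range (n + 1),
        (∑ T ∈ (Finset.univ : Finset (Fin n)).powersetCard i,
          ((-1 : Polynomial ℂ) ^ T.card * Polynomial.X ^ T.card) •
            regMat Γ (∑ j ∈ T, sbar Γ j)) =
        ((-1 : Polynomial ℂ) ^ i * Polynomial.X ^ i) • adjMat Γ i := by
      intro i _
      rw [adjMat, Finset.smul_sum]
      refine Finset.sum_congr rfl fun T hT => ?_
      rw [(Finset.mem_powersetCard.mp hT).2]
    rw [Finset.sum_congr rfl hinner]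
    have hset : Finset.range (n + 1) = insert 0 (insert n (Finset.Icc 1 (n - 1))) := by
      ext i
      simp only [Finset.mem_range, Finset.mem_insert, Finset.mem_Icc]
      omega
    have h0n : (0 : ℕ) ∉ insert n (Finset.Icc 1 (n - 1)) := by
      simp only [Finset.mem_insert, Finset.mem_Icc]
      omega
    have hnn : n ∉ Finset.Icc 1 (n - 1) := by
      simp only [Finset.mem_Icc]
      omega
    rw [hset, Finset.sum_insert h0n, Finset.sum_insert hnn, hA0, hAn]
    simp only [pow_zero, one_mul, one_smul]
    abel
  rw [hM]
  -- Rewrite the RHS as a product over `ℂ`-valued characters.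
  letI : Fintype (AddChar (Qgrp Γ) ℂˣ) := Fintype.ofEquiv _ (unitsCharEquiv (Qgrp Γ)).symm
  rw [finprod_eq_prod_of_fintype]
  have hRHS : (∏ ρ : AddChar (Qgrp Γ) ℂˣ,
      ∏ j : Fin n, (1 - Polynomial.C ((ρ (sbar Γ j) : ℂˣ) : ℂ) * Polynomial.X)) =
      ∏ ψ : AddChar (Qgrp Γ) ℂ,
        ∏ j : Fin n, (1 - Polynomial.C (ψ (sbar Γ j)) * Polynomial.X) := by
    rw [← Equiv.prod_comp (unitsCharEquiv (Qgrp Γ)).symm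
      (fun ρ : AddChar (Qgrp Γ) ℂˣ =>
        ∏ j : Fin n, (1 - Polynomial.C ((ρ (sbar Γ j) : ℂˣ) : ℂ) * Polynomial.X))]
    refine Finset.prod_congr rfl fun ψ _ => Finset.prod_congr rfl fun j _ => ?_
    rw [unitsCharEquiv_symm_coe]
  rw [hRHS]
  -- Now prove the polynomial identity by evaluating at every complex number.
  apply Polynomial.funext
  intro u
  rw [← Polynomial.coe_evalRingHom, RingHom.map_det]
  -- The evaluated matrix is a circulant.
  set c : Qgrp Γ → ℂ := fun z =>
    ∑ T ∈ (Finset.univ : Finset (Fin n)).powerset,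
      if (∑ j ∈ T, sbar Γ j) = z then (-u) ^ T.card else 0 with hc
  have hmap : (Polynomial.evalRingHom u).mapMatrix
      (∑ T ∈ (Finset.univ : Finset (Fin n)).powerset,
        ((-1 : Polynomial ℂ) ^ T.card * Polynomial.X ^ T.card) •
          regMat Γ (∑ j ∈ T, sbar Γ j)) =
      Matrix.of fun x y : Qgrp Γ => c (x - y) := by
    ext x y
    simp only [RingHom.mapMatrix_apply, Matrix.map_apply, Matrix.sum_apply,
      Matrix.smul_apply, regMat, Matrix.of_apply, smul_eq_mul, map_sum]
    rw [hc]
    refine Finset.sum_congr rfl fun T _ => ?_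
    rw [mul_ite, mul_one, mul_zero, apply_ite (Polynomial.evalRingHom u), map_zero]
    have hval : (Polynomial.evalRingHom u) ((-1 : Polynomial ℂ) ^ T.card * Polynomial.X ^ T.card)
        = (-u) ^ T.card := by
      simp only [Polynomial.coe_evalRingHom, Polynomial.eval_mul, Polynomial.eval_pow,
        Polynomial.eval_neg, Polynomial.eval_one, Polynomial.eval_X]
      rw [← neg_one_mul u, mul_pow]
    rw [hval]
    have hcond : (x = (∑ j ∈ T, sbar Γ j) + y) ↔ ((∑ j ∈ T, sbar Γ j) = x - y) := by
      constructor
      · intro h; rw [h]; abel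
      · intro h; rw [h]; abel
    exact if_congr hcond rfl rfl
  rw [hmap, det_addCirculant]
  -- Compute the eigenvalues.
  have heig : ∀ ψ : AddChar (Qgrp Γ) ℂ,
      (∑ z : Qgrp Γ, c z * ψ (-z)) =
      ∏ j : Fin n, (1 + (-u) * ψ (-(sbar Γ j))) := by
    intro ψ
    have h1 : (∑ z : Qgrp Γ, c z * ψ (-z)) =
        ∑ T ∈ (Finset.univ : Finset (Fin n)).powerset,
          (-u) ^ T.card * ψ (-(∑ j ∈ T, sbar Γ j)) := by
      rw [hc]
      simp only [Finset.sum_mul]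
      rw [Finset.sum_comm]
      refine Finset.sum_congr rfl fun T _ => ?_
      simp only [ite_mul, zero_mul]
      rw [Finset.sum_ite_eq (Finset.univ : Finset (Qgrp Γ)) (∑ j ∈ T, sbar Γ j)
        (fun z => (-u) ^ T.card * ψ (-z))]
      simp
    rw [h1]
    have h2 : ∀ T ∈ (Finset.univ : Finset (Fin n)).powerset,
        (-u) ^ T.card * ψ (-(∑ j ∈ T, sbar Γ j)) =
        ∏ j ∈ T, ((-u) * ψ (-(sbar Γ j))) := by
      intro T _
      rw [Finset.prod_mul_distrib, Finset.prod_const]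
      congr 1
      rw [← addChar_map_sum ψ T (fun j => -(sbar Γ j)), ← Finset.sum_neg_distrib]
    rw [Finset.sum_congr rfl h2]
    have h3 := Finset.prod_add (fun j => (-u) * ψ (-(sbar Γ j))) (fun _ => (1 : ℂ)) Finset.univ
    simp only [Finset.prod_const_one, mul_one] at h3
    rw [← h3]
    exact Finset.prod_congr rfl fun j _ => (add_comm _ _)
  calc ∏ ψ : AddChar (Qgrp Γ) ℂ, ∑ z : Qgrp Γ, c z * ψ (-z)
      = ∏ ψ : AddChar (Qgrp Γ) ℂ, ∏ j : Fin n, (1 + (-u) * ψ (-(sbar Γ j))) :=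
        Finset.prod_congr rfl fun ψ _ => heig ψ
    _ = ∏ ψ : AddChar (Qgrp Γ) ℂ, ∏ j : Fin n, (1 + (-u) * ψ (sbar Γ j)) := by
        rw [← Equiv.prod_comp (Equiv.inv (AddChar (Qgrp Γ) ℂ))
          (fun ψ : AddChar (Qgrp Γ) ℂ => ∏ j : Fin n, (1 + (-u) * ψ (sbar Γ j)))]
        refine Finset.prod_congr rfl fun ψ _ => Finset.prod_congr rfl fun j _ => ?_
        rw [Equiv.inv_apply, AddChar.inv_apply]
    _ = Polynomial.eval u (∏ ψ : AddChar (Qgrp Γ) ℂ,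
          ∏ j : Fin n, (1 - Polynomial.C (ψ (sbar Γ j)) * Polynomial.X)) := by
        rw [Polynomial.eval_prod]
        refine Finset.prod_congr rfl fun ψ _ => ?_
        rw [Polynomial.eval_prod]
        refine Finset.prod_congr rfl fun j _ => ?_
        simp only [Polynomial.eval_sub, Polynomial.eval_one, Polynomial.eval_mul,
          Polynomial.eval_C, Polynomial.eval_X]
        ring
end
end
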